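/- arXiv:2503.07869 — 2 statements merged into one kernel-verified Lean document; each statement's English description precedes it below -/
import Mathlib

section
/- (Optimal contract satisfies all IC constraints) Let 0 < θ_1 < … < θ_K, 0 < h_1 ≤ … ≤ h_K, δ > 0, β > 1, and define r_k = Σ_{i=1}^{k} θ_i²·(h_i² − h_{i-1}²)/(2δ(β−1)) with h_0 = 0. Then for all k, k' ∈ {1, …, K}: θ_k²·h_k²/(2δ) − (β−1)·r_k ≥ θ_k²·h_{k'}²/(2δ) − (β−1)·r_{k'}. -/
/-- The optimal contract with closed-form salaries satisfies all IC constraints. -/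
theorem stmt_13 (K : ℕ) (θ h : ℕ → ℝ) (δ β : ℝ) (hδ : 0 < δ) (hβ : 1 < β)
    (h0 : h 0 = 0) (hθ1 : 0 < θ 1) (hh1 : 0 < h 1)
    (hθmono : ∀ i j, 1 ≤ i → i < j → j ≤ K → θ i < θ j)
    (hhmono : ∀ i j, 1 ≤ i → i ≤ j → j ≤ K → h i ≤ h j)
    (r : ℕ → ℝ)
    (hr : ∀ k, r k = ∑ i ∈ Finset.Icc 1 k,
      θ i ^ 2 * (h i ^ 2 - h (i - 1) ^ 2) / (2 * δ * (β - 1))) :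
    ∀ k k', 1 ≤ k → k ≤ K → 1 ≤ k' → k' ≤ K →
      θ k ^ 2 * h k ^ 2 / (2 * δ) - (β - 1) * r k ≥
        θ k ^ 2 * h k' ^ 2 / (2 * δ) - (β - 1) * r k' := by
  have hβ' : 0 < β - 1 := by linarith
  set S : ℕ → ℝ := fun k => ∑ i ∈ Finset.Icc 1 k, θ i ^ 2 * (h i ^ 2 - h (i - 1) ^ 2)
    with hS
  have hrk : ∀ k, (β - 1) * r k = S k / (2 * δ) := by
    intro k
    rw [hr, Finset.mul_sum, hS, Finset.sum_div]
    refine Finset.sum_congr rfl fun i _ => ?_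
    field_simp
  have hθle : ∀ i j, 1 ≤ i → i ≤ j → j ≤ K → θ i ≤ θ j := by
    intro i j hi hij hj
    rcases eq_or_lt_of_le hij with rfl | hlt
    · exact le_rfl
    · exact le_of_lt (hθmono i j hi hlt hj)
  have hhnn : ∀ i, i ≤ K → 0 ≤ h i := by
    intro i hi
    rcases Nat.eq_zero_or_pos i with rfl | hpos
    · rw [h0]
    · exact le_trans hh1.le (hhmono 1 i le_rfl hpos hi)
  have hΔ : ∀ i, 1 ≤ i → i ≤ K → 0 ≤ h i ^ 2 - h (i - 1) ^ 2 := by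
    intro i hi hik
    rcases eq_or_lt_of_le hi with rfl | h2
    · simp [h0]
      positivity
    · have h1i : 1 ≤ i - 1 := by omega
      have hle : h (i - 1) ≤ h i := hhmono (i - 1) i h1i (by omega) hik
      have hnn : 0 ≤ h (i - 1) := hhnn (i - 1) (by omega)
      nlinarith
  have hsucc : ∀ n, S (n + 1) = S n + θ (n + 1) ^ 2 * (h (n + 1) ^ 2 - h n ^ 2) := by
    intro n
    rw [hS]
    simp only
    rw [Finset.sum_Icc_succ_top (by omega : 1 ≤ n + 1)]
    simp
  have main : ∀ m, 1 ≤ m → ∀ n, m ≤ n → n ≤ K →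
      θ m ^ 2 * (h n ^ 2 - h m ^ 2) ≤ S n - S m ∧
      S n - S m ≤ θ n ^ 2 * (h n ^ 2 - h m ^ 2) := by
    intro m hm
    intro n hmn hnK
    induction n, hmn using Nat.le_induction with
    | base => constructor <;> simp
    | succ n hmn ih =>
      have ihh := ih (by omega)
      have hθn : θ n ≤ θ (n + 1) := hθle n (n + 1) (by omega) (by omega) hnK
      have hθmn : θ m ≤ θ (n + 1) := hθle m (n + 1) hm (by omega) hnK
      have hθm' : θ m ≤ θ n := hθle m n hm hmn (by omega)
      have hθpos : 0 < θ m := lt_of_lt_of_le hθ1 (hθle 1 m le_rfl hm (by omega))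
      have hΔn : 0 ≤ h (n + 1) ^ 2 - h n ^ 2 := hΔ (n + 1) (by omega) hnK
      have hΔm : 0 ≤ h n ^ 2 - h m ^ 2 := by
        have := hhmono m n hm hmn (by omega)
        have := hhnn m (by omega)
        nlinarith
      rw [hsucc]
      have hθnpos : 0 < θ n := lt_of_lt_of_le hθpos hθm'
      have hs1 : θ m ^ 2 * (h (n + 1) ^ 2 - h n ^ 2) ≤
          θ (n + 1) ^ 2 * (h (n + 1) ^ 2 - h n ^ 2) :=
        mul_le_mul_of_nonneg_right (by nlinarith) hΔn
      have hs2 : θ n ^ 2 * (h n ^ 2 - h m ^ 2) ≤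
          θ (n + 1) ^ 2 * (h n ^ 2 - h m ^ 2) :=
        mul_le_mul_of_nonneg_right (by nlinarith) hΔm
      constructor
      · nlinarith [ihh.1, hs1]
      · nlinarith [ihh.2, hs2]
  intro k k' hk hkK hk' hk'K
  rw [ge_iff_le, hrk, hrk]
  have h2δ : 0 < 2 * δ := by linarith
  rw [div_sub_div_same, div_sub_div_same]
  rw [div_le_div_iff₀ h2δ h2δ]
  apply mul_le_mul_of_nonneg_right ?_ h2δ.le
  rcases le_total k' k with hle | hle
  · have := (main k' hk' k hle hkK).2
    linarith
  · have := (main k hk k' hle hk'K).1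
    linarith
end

section
/- (Optimal contract satisfies all IR constraints) With the same hypotheses and closed-form salaries r_k = Σ_{i=1}^{k} θ_i²·(h_i² − h_{i-1}²)/(2δ(β−1)), h_0 = 0, each type's equilibrium utility is nonnegative: θ_k²·h_k²/(2δ) − (β−1)·r_k ≥ 0 for all k, with equality at k = 1. -/
/-- The optimal contract satisfies all IR constraints, with equality at type 1. -/
theorem stmt_14 (K : ℕ) (θ h : ℕ → ℝ) (δ β : ℝ) (hδ : 0 < δ) (hβ : 1 < β)
    (h0 : h 0 = 0) (hθ1 : 0 < θ 1) (hh1 : 0 < h 1)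
    (hθmono : ∀ i j, 1 ≤ i → i < j → j ≤ K → θ i < θ j)
    (hhmono : ∀ i j, 1 ≤ i → i ≤ j → j ≤ K → h i ≤ h j)
    (r : ℕ → ℝ)
    (hr : ∀ k, r k = ∑ i ∈ Finset.Icc 1 k,
      θ i ^ 2 * (h i ^ 2 - h (i - 1) ^ 2) / (2 * δ * (β - 1))) :
    (∀ k, 1 ≤ k → k ≤ K → θ k ^ 2 * h k ^ 2 / (2 * δ) - (β - 1) * r k ≥ 0) ∧
    θ 1 ^ 2 * h 1 ^ 2 / (2 * δ) - (β - 1) * r 1 = 0 := by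
  have hδ' : (2 * δ) ≠ 0 := by positivity
  have hβ' : β - 1 ≠ 0 := by linarith
  have hr1 : r 1 = θ 1 ^ 2 * h 1 ^ 2 / (2 * δ * (β - 1)) := by
    rw [hr, Finset.Icc_self, Finset.sum_singleton]
    simp [h0]
  have heq : θ 1 ^ 2 * h 1 ^ 2 / (2 * δ) - (β - 1) * r 1 = 0 := by
    rw [hr1]; field_simp; ring
  have hθpos : ∀ k, 1 ≤ k → k ≤ K → 0 < θ k := by
    intro k hk1 hkK
    rcases eq_or_lt_of_le hk1 with h | h
    · rwa [← h]
    · exact lt_trans hθ1 (hθmono 1 k le_rfl h hkK)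
  have hhpos : ∀ k, 1 ≤ k → k ≤ K → 0 < h k := by
    intro k hk1 hkK
    exact lt_of_lt_of_le hh1 (hhmono 1 k le_rfl hk1 hkK)
  have main : ∀ k, 1 ≤ k → k ≤ K → (β - 1) * r k ≤ θ k ^ 2 * h k ^ 2 / (2 * δ) := by
    intro k hk1
    induction k, hk1 using Nat.le_induction with
    | base => intro _; linarith [heq]
    | succ n hn ih =>
      intro hnK
      have hnK' : n ≤ K := by omega
      have ihn := ih hnK'
      have hrsucc : r (n + 1) = r n + θ (n + 1) ^ 2 * (h (n + 1) ^ 2 - h n ^ 2) /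
          (2 * δ * (β - 1)) := by
        rw [hr, hr, Finset.sum_Icc_succ_top (by omega : 1 ≤ n + 1)]
        simp
      have hθle : θ n ≤ θ (n + 1) := le_of_lt (hθmono n (n + 1) hn (by omega) hnK)
      have hθn : 0 < θ n := hθpos n hn hnK'
      have hθsq : θ n ^ 2 ≤ θ (n + 1) ^ 2 := by nlinarith
      have hhle : h n ≤ h (n + 1) := hhmono n (n + 1) hn (by omega) hnK
      have hhn : 0 < h n := hhpos n hn hnK'
      have hhsq : h n ^ 2 ≤ h (n + 1) ^ 2 := by nlinarith
      have key : (β - 1) * (θ (n + 1) ^ 2 * (h (n + 1) ^ 2 - h n ^ 2) /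
          (2 * δ * (β - 1))) = θ (n + 1) ^ 2 * (h (n + 1) ^ 2 - h n ^ 2) / (2 * δ) := by
        field_simp
      rw [hrsucc, mul_add, key]
      have h1 : θ n ^ 2 * h n ^ 2 / (2 * δ) ≤ θ (n + 1) ^ 2 * h n ^ 2 / (2 * δ) := by
        apply div_le_div_of_nonneg_right _ (by positivity)
        nlinarith
      have h2 : θ (n + 1) ^ 2 * h n ^ 2 / (2 * δ) +
          θ (n + 1) ^ 2 * (h (n + 1) ^ 2 - h n ^ 2) / (2 * δ) =
          θ (n + 1) ^ 2 * h (n + 1) ^ 2 / (2 * δ) := by ring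
      linarith
  refine ⟨fun k hk1 hkK => by linarith [main k hk1 hkK], heq⟩
end
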